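/- In a single sketch with hash function h into w buckets, the expected estimate of an edge weight satisfies E[count(h(j),h(k))] ≤ f_e(j,k) + n/w², where n is the total weight of edges (l,m) with l ≠ j and m ≠ k, provided h is pairwise independent. -/

import Mathlib

open MeasureTheory Finset

/-!
Bound the count pointwise by `f (j, k)` plus the weights of those edges `(l, m)` with `l ≠ j`,
`m ≠ k` whose collision event occurs, then integrate: each such event has probability at most `1 / w²`.
The hash function is not assumed measurable, so the collision events are replaced by measurable
hulls of the same measure before integrating.
-/

theorem Finset.sum_filter_le_add_sum_ite {ι : Type*} [Fintype ι] [DecidableEq ι] {f : ι → ℝ}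
    (hf : ∀ x, 0 ≤ f x) (p q : ι → Prop) [DecidablePred p] [DecidablePred q] (x₀ : ι)
    (hsupp : ∀ x, f x ≠ 0 → x = x₀ ∨ q x) :
    ∑ x ∈ univ.filter p, f x ≤ f x₀ + ∑ x ∈ univ.filter q, if p x then f x else 0 := by
  rw [sum_filter, sum_filter, ← Fintype.sum_ite_eq' x₀ f, ← sum_add_distrib]
  refine sum_le_sum fun x _ => ?_
  by_cases hx : f x = 0
  · split_ifs <;> simp [hx]
  · rcases hsupp x hx with rfl | hq <;> split_ifs <;> simp_all

theorem MeasureTheory.integral_le_add_sum_measureReal_mul {Ω ι : Type*} [MeasurableSpace Ω]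
    {μ : Measure Ω} [IsProbabilityMeasure μ] {F : Ω → ℝ} (s : Finset ι) {c : ℝ} (hc : 0 ≤ c)
    {a : ι → ℝ} (ha : ∀ i, 0 ≤ a i) (A : ι → Set Ω)
    (hF : ∀ ω, F ω ≤ c + ∑ i ∈ s, (A i).indicator (fun _ => a i) ω) :
    ∫ ω, F ω ∂μ ≤ c + ∑ i ∈ s, μ.real (A i) * a i := by
  by_cases hint : Integrable F μ
  swap
  · rw [integral_undef hint]
    exact add_nonneg hc (sum_nonneg fun i _ => mul_nonneg measureReal_nonneg (ha i))
  set B := fun i => toMeasurable μ (A i)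
  have hB : ∀ i, MeasurableSet (B i) := fun i => measurableSet_toMeasurable μ (A i)
  have hint_ind : ∀ i, Integrable ((B i).indicator fun _ => a i) μ :=
    fun i => (integrable_const (a i)).indicator (hB i)
  have hle : ∀ ω, F ω ≤ c + ∑ i ∈ s, (B i).indicator (fun _ => a i) ω := fun ω =>
    (hF ω).trans <| add_le_add_right (sum_le_sum fun i _ =>
      Set.indicator_le_indicator_of_subset (subset_toMeasurable μ (A i)) (fun _ => ha i) ω) c
  calc ∫ ω, F ω ∂μ ≤ ∫ ω, c + ∑ i ∈ s, (B i).indicator (fun _ => a i) ω ∂μ :=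
        integral_mono hint ((integrable_const c).add (integrable_finsetSum s fun i _ =>
          hint_ind i)) hle
    _ = c + ∑ i ∈ s, μ.real (A i) * a i := by
        rw [integral_add (integrable_const c) (integrable_finsetSum s fun i _ => hint_ind i),
          integral_const, probReal_univ, one_smul, integral_finsetSum s fun i _ => hint_ind i]
        simp only [integral_indicator_const _ (hB _), smul_eq_mul, B, Measure.real,
          measure_toMeasurable]

/-- Single-sketch expected edge estimate: if every edge in the support of the
stream either equals `(j,k)` or differs from it in both coordinates, then
`E[count(h j, h k)] ≤ f(j,k) + n/w²`, where `n` is the total weight of edges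
differing from `(j,k)` in both coordinates. -/
theorem stmt_13 {Ω V : Type*} [MeasurableSpace Ω] (μ : Measure Ω) [IsProbabilityMeasure μ]
    [Fintype V] [DecidableEq V]
    (w : ℕ) (hw : 0 < w) (h : Ω → V → Fin w) (j k : V)
    (pairwise_indep : ∀ l m : V, l ≠ j → m ≠ k →
      μ {ω | h ω l = h ω j ∧ h ω m = h ω k} ≤ 1 / (w : ENNReal) ^ 2)
    (f : V × V → ℝ) (hf : ∀ e, 0 ≤ f e)
    (hsupp : ∀ l m : V, f (l, m) ≠ 0 → (l, m) = (j, k) ∨ (l ≠ j ∧ m ≠ k))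
    (n : ℝ)
    (hn : n = ∑ e ∈ Finset.univ.filter (fun e : V × V => e.1 ≠ j ∧ e.2 ≠ k), f e) :
    (∫ ω, (∑ e ∈ Finset.univ.filter
        (fun e : V × V => h ω e.1 = h ω j ∧ h ω e.2 = h ω k), f e) ∂μ)
      ≤ f (j, k) + n / (w : ℝ) ^ 2 := by
  classical
  set T := univ.filter fun e : V × V => e.1 ≠ j ∧ e.2 ≠ k
  set collide : V × V → Set Ω := fun e => {ω | h ω e.1 = h ω j ∧ h ω e.2 = h ω k}
  have hcollide : ∀ e ∈ T, μ.real (collide e) ≤ 1 / (w : ℝ) ^ 2 := fun e he => by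
    simp only [T, mem_filter, mem_univ, true_and] at he
    simpa [Measure.real, collide] using ENNReal.toReal_mono (by simp [hw.ne']) (pairwise_indep e.1 e.2 he.1 he.2)
  have hcount : ∀ ω, ∑ e ∈ univ.filter (fun e : V × V => h ω e.1 = h ω j ∧ h ω e.2 = h ω k), f e
      ≤ f (j, k) + ∑ e ∈ T, (collide e).indicator (fun _ => f e) ω := fun ω => by
    simpa only [Set.indicator_apply, collide, Set.mem_ofPred_eq] using
      sum_filter_le_add_sum_ite hf _ _ (j, k) fun e he => hsupp e.1 e.2 he
  calc _ ≤ f (j, k) + ∑ e ∈ T, μ.real (collide e) * f e :=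
        integral_le_add_sum_measureReal_mul T (hf (j, k)) hf collide hcount
    _ ≤ f (j, k) + ∑ e ∈ T, 1 / (w : ℝ) ^ 2 * f e := by
        gcongr with e he
        · exact hf e
        · exact hcollide e he
    _ = f (j, k) + n / (w : ℝ) ^ 2 := by rw [← mul_sum, hn]; ring
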